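/- For every Heyting algebra H there exist a topological space X and a map f : H → O(X) into the lattice of open sets of X (ordered by inclusion) such that f is injective and satisfies f(a ⊔ b) = f(a) ∪ f(b), f(a ⊓ b) = f(a) ∩ f(b), f(⊥) = ∅ and f(⊤) = X for all a, b ∈ H (Stone's representation theorem for Heyting algebras). -/
import Mathlib


universe u

namespace StoneRepAux

variable {H : Type u} [HeytingAlgebra H]

/-- A (proper-ness not required) filter as a set. -/
structure IsFilter (F : Set H) : Prop where
  top_mem : ⊤ ∈ F
  up : ∀ {x y : H}, x ∈ F → x ≤ y → y ∈ F
  inf_mem : ∀ {x y : H}, x ∈ F → y ∈ F → x ⊓ y ∈ F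

/-- A prime filter. -/
structure IsPrimeFilter (F : Set H) extends IsFilter F : Prop where
  bot_nmem : ⊥ ∉ F
  prime : ∀ {x y : H}, x ⊔ y ∈ F → x ∈ F ∨ y ∈ F

theorem separation {a b : H} (hab : ¬ a ≤ b) :
    ∃ F : Set H, IsPrimeFilter F ∧ a ∈ F ∧ b ∉ F := by
  classical
  set S : Set (Set H) := {F | IsFilter F ∧ a ∈ F ∧ b ∉ F} with hS
  have hmem : {x : H | a ≤ x} ∈ S := by
    refine ⟨⟨le_top, fun hx hxy => hx.trans hxy, fun hx hy => le_inf hx hy⟩, le_rfl, hab⟩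
  have hchain : ∀ c ⊆ S, IsChain (· ⊆ ·) c → c.Nonempty → ∃ ub ∈ S, ∀ s ∈ c, s ⊆ ub := by
    intro c hcS hchain hcne
    refine ⟨⋃₀ c, ⟨⟨?_, ?_, ?_⟩, ?_, ?_⟩, fun F hF => Set.subset_sUnion_of_mem hF⟩
    · obtain ⟨F, hF⟩ := hcne
      exact ⟨F, hF, (hcS hF).1.top_mem⟩
    · rintro x y ⟨F, hF, hx⟩ hxy
      exact ⟨F, hF, (hcS hF).1.up hx hxy⟩
    · rintro x y ⟨F, hF, hx⟩ ⟨G, hG, hy⟩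
      rcases hchain.total hF hG with h | h
      · exact ⟨G, hG, (hcS hG).1.inf_mem (h hx) hy⟩
      · exact ⟨F, hF, (hcS hF).1.inf_mem hx (h hy)⟩
    · obtain ⟨F, hF⟩ := hcne
      exact ⟨F, hF, (hcS hF).2.1⟩
    · rintro ⟨F, hF, hb⟩
      exact (hcS hF).2.2 hb
  obtain ⟨F, -, hmax⟩ := zorn_subset_nonempty S hchain _ hmem
  obtain ⟨hFfil, haF, hbF⟩ := hmax.prop
  refine ⟨F, ⟨hFfil, fun hbot => hbF (hFfil.up hbot bot_le), ?_⟩, haF, hbF⟩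
  intro x y hxy
  by_contra hcon
  push_neg at hcon
  obtain ⟨hx, hy⟩ := hcon
  -- extend F by z, get b
  have ext : ∀ z : H, z ∉ F → ∃ c ∈ F, c ⊓ z ≤ b := by
    intro z hz
    set G : Set H := {w | ∃ c ∈ F, c ⊓ z ≤ w} with hG
    have hGfil : IsFilter G := by
      refine ⟨⟨⊤, hFfil.top_mem, le_top⟩, ?_, ?_⟩
      · rintro u v ⟨c, hc, hle⟩ huv
        exact ⟨c, hc, hle.trans huv⟩
      · rintro u v ⟨c, hc, hcu⟩ ⟨d, hd, hdv⟩
        refine ⟨c ⊓ d, hFfil.inf_mem hc hd, ?_⟩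
        calc c ⊓ d ⊓ z ≤ (c ⊓ z) ⊓ (d ⊓ z) := by
              refine le_inf (inf_le_inf_right _ inf_le_left) (inf_le_inf_right _ inf_le_right)
          _ ≤ u ⊓ v := inf_le_inf hcu hdv
    have hFG : F ⊆ G := fun w hw => ⟨w, hw, inf_le_left⟩
    have hzG : z ∈ G := ⟨⊤, hFfil.top_mem, inf_le_right⟩
    by_cases hbG : b ∈ G
    · exact hbG
    · have hGF : G ⊆ F := hmax.2 ⟨hGfil, hFG haF, hbG⟩ hFG
      exact absurd (hGF hzG) hz
  obtain ⟨c, hc, hcb⟩ := ext x hx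
  obtain ⟨d, hd, hdb⟩ := ext y hy
  have key : (c ⊓ d) ⊓ (x ⊔ y) ≤ b := by
    rw [inf_sup_left]
    refine sup_le ?_ ?_
    · exact le_trans (inf_le_inf_right _ inf_le_left) hcb
    · exact le_trans (inf_le_inf_right _ inf_le_right) hdb
  exact hbF (hFfil.up (hFfil.inf_mem (hFfil.inf_mem hc hd) hxy) key)

end StoneRepAux

/-- **Stone's representation theorem for Heyting algebras.**
Every Heyting algebra `H` admits a topological space `X` and an injective map
`f : H → Set X` into the open sets of `X` preserving joins (as unions), meets
(as intersections), bottom (as `∅`) and top (as `X`). -/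
theorem stone_representation_heyting (H : Type u) [HeytingAlgebra H] :
    ∃ (X : Type u) (_ : TopologicalSpace X) (f : H → Set X),
      Function.Injective f ∧
      (∀ a : H, IsOpen (f a)) ∧
      (∀ a b : H, f (a ⊔ b) = f a ∪ f b) ∧
      (∀ a b : H, f (a ⊓ b) = f a ∩ f b) ∧
      f ⊥ = (∅ : Set X) ∧
      f ⊤ = (Set.univ : Set X) := by
  classical
  set X : Type u := {F : Set H // StoneRepAux.IsPrimeFilter F} with hX
  set f : H → Set X := fun a => {F | a ∈ F.1} with hf
  refine ⟨X, TopologicalSpace.generateFrom (Set.range f), f, ?_, ?_, ?_, ?_, ?_, ?_⟩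
  · intro a b hab
    by_contra hne
    have h : ¬ a ≤ b ∨ ¬ b ≤ a := by
      by_contra h; push_neg at h; exact hne (le_antisymm h.1 h.2)
    rcases h with h | h
    · obtain ⟨F, hF, haF, hbF⟩ := StoneRepAux.separation h
      have : (⟨F, hF⟩ : X) ∈ f a := haF
      rw [hab] at this
      exact hbF this
    · obtain ⟨F, hF, hbF, haF⟩ := StoneRepAux.separation h
      have : (⟨F, hF⟩ : X) ∈ f b := hbF
      rw [← hab] at this
      exact haF this
  · exact fun a => TopologicalSpace.GenerateOpen.basic _ ⟨a, rfl⟩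
  · intro a b
    ext F
    constructor
    · exact fun h => F.2.prime h
    · rintro (h | h)
      · exact F.2.up h le_sup_left
      · exact F.2.up h le_sup_right
  · intro a b
    ext F
    exact ⟨fun h => ⟨F.2.up h inf_le_left, F.2.up h inf_le_right⟩,
      fun ⟨h1, h2⟩ => F.2.inf_mem h1 h2⟩
  · ext F; simp only [Set.mem_empty_iff_false, iff_false]; exact F.2.bot_nmem
  · ext F; simp only [Set.mem_univ, iff_true]; exact F.2.top_mem
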